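/- arXiv:2212.06426 — 4 statements merged into one kernel-verified Lean document; each statement's English description precedes it below -/
import Mathlib

section
/- Every ℝ-linear derivation of the real quaternions is inner by a unique purely imaginary quaternion: if D : ℍ → ℍ is ℝ-linear and satisfies D(xy) = D(x)·y + x·D(y) for all x, y ∈ ℍ, then there exists a unique quaternion q ∈ ℍ with real part zero such that D(x) = q·x − x·q for all x ∈ ℍ. -/
/-!
A derivation kills `1`, so it is determined by its values on `i` and `j`, since `1, i, j, ij`
span `ℍ`. Applying `D` to `i² = j² = -1` and to `ij + ji = 0` gives `D i ∈ span {j, k}`,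
`D j ∈ span {i, k}` and `(D j).imI = -(D i).imJ`: three free coordinates, matched exactly by
the commutators `x ↦ q x - x q` with `q` purely imaginary. The commutant of `{i, j}` is `ℝ`,
which makes `q` unique.
-/

open Quaternion

section Derivation

variable {A : Type*} [Ring A]

/-- For `R`-linear `D`, being an `R`-derivation of `A`: Mathlib's `Derivation` needs `A`
commutative, which `ℍ` is not. -/
def IsDerivation (D : A → A) : Prop :=
  ∀ x y, D (x * y) = D x * y + x * D y

theorem IsDerivation.map_one {D : A → A} (hD : IsDerivation D) : D 1 = 0 := by
  simpa using hD 1 1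

variable (R : Type*) [CommRing R] [Algebra R A]

def innerDerivation (q : A) : A →ₗ[R] A :=
  LinearMap.mulLeft R q - LinearMap.mulRight R q

@[simp]
theorem innerDerivation_apply (q x : A) : innerDerivation R q x = q * x - x * q :=
  rfl

theorem isDerivation_innerDerivation (q : A) : IsDerivation (innerDerivation R q) := by
  intro x y
  simp only [innerDerivation_apply]
  noncomm_ring

end Derivation

namespace Quaternion

attribute [local simp] re_mul imI_mul imJ_mul imK_mul

section CommRing

variable {R : Type*} [CommRing R]

@[simps]
def i : ℍ[R] := ⟨0, 1, 0, 0⟩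

@[simps]
def j : ℍ[R] := ⟨0, 0, 1, 0⟩

theorem i_mul_i : (i : ℍ[R]) * i = -1 := by ext <;> simp

theorem j_mul_j : (j : ℍ[R]) * j = -1 := by ext <;> simp

theorem j_mul_i : (j : ℍ[R]) * i = -(i * j) := by ext <;> simp

theorem eq_re_add_imI_add_imJ_add_imK (x : ℍ[R]) :
    x = x.re • 1 + x.imI • i + x.imJ • j + x.imK • (i * j) := by
  ext <;> simp

theorem ext_of_isDerivation {D E : ℍ[R] →ₗ[R] ℍ[R]} (hD : IsDerivation D) (hE : IsDerivation E)
    (hi : D i = E i) (hj : D j = E j) : D = E := by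
  refine LinearMap.ext fun x => ?_
  rw [eq_re_add_imI_add_imJ_add_imK x]
  simp only [map_add, map_smul, hD i j, hE i j, hD.map_one, hE.map_one, hi, hj]

end CommRing

section Field

variable {R : Type*} [Field R] [CharZero R]

theorem exists_re_eq_zero_commutator_eq {a b : ℍ[R]} (ha : a * i + i * a = 0)
    (hb : b * j + j * b = 0) (hab : a * j + i * b = -(b * i + j * a)) :
    ∃ q : ℍ[R], q.re = 0 ∧ q * i - i * q = a ∧ q * j - j * q = b := by
  have ha_re : a.re = 0 := by simpa using congrArg (·.imI) ha
  have ha_imI : a.imI = 0 := by simpa using congrArg (·.re) ha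
  have hb_re : b.re = 0 := by simpa using congrArg (·.imJ) hb
  have hb_imJ : b.imJ = 0 := by simpa using congrArg (·.re) hb
  have hb_imI : b.imI = -a.imJ := by
    have h : -a.imJ + -b.imI = a.imJ + b.imI := by simpa using congrArg (·.re) hab
    linear_combination (-1 / 2 : R) * h
  refine ⟨(b.imK / 2) • i - (a.imK / 2) • j + (a.imJ / 2) • (i * j), by simp, ?_, ?_⟩ <;>
    ext <;> simp [ha_re, ha_imI, hb_re, hb_imJ, hb_imI, neg_sub_left]

theorem eq_of_re_eq_of_commutator_eq {p q : ℍ[R]} (hre : p.re = q.re)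
    (hi : p * i - i * p = q * i - i * q) (hj : p * j - j * p = q * j - j * q) : p = q := by
  ext
  · exact hre
  · have h : p.imI + p.imI = q.imI + q.imI := by simpa using congrArg (·.imK) hj
    linear_combination h / 2
  · have h : -p.imJ - p.imJ = -q.imJ - q.imJ := by simpa using congrArg (·.imK) hi
    linear_combination -h / 2
  · have h : p.imK + p.imK = q.imK + q.imK := by simpa using congrArg (·.imJ) hi
    linear_combination h / 2

end Field

end Quaternion

/-- Every ℝ-linear derivation of the quaternions is inner by a unique purely
imaginary quaternion. -/
theorem derivation_quaternion_inner (D : Quaternion ℝ →ₗ[ℝ] Quaternion ℝ)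
    (hD : ∀ x y : Quaternion ℝ, D (x * y) = D x * y + x * D y) :
    ∃! q : Quaternion ℝ, q.re = 0 ∧ ∀ x : Quaternion ℝ, D x = q * x - x * q := by
  have hD_neg_one : D (-1) = 0 := by rw [map_neg, IsDerivation.map_one hD, neg_zero]
  obtain ⟨q, hq_re, hq_i, hq_j⟩ := exists_re_eq_zero_commutator_eq
    (by rw [← hD, i_mul_i, hD_neg_one]) (by rw [← hD, j_mul_j, hD_neg_one])
    (by rw [← hD, ← hD, j_mul_i, map_neg, neg_neg])
  refine ⟨q, ⟨hq_re, fun x => ?_⟩, fun p ⟨hp_re, hp⟩ => ?_⟩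
  · have hD_eq := ext_of_isDerivation hD (isDerivation_innerDerivation ℝ q) hq_i.symm hq_j.symm
    exact LinearMap.congr_fun hD_eq x
  · exact eq_of_re_eq_of_commutator_eq (hp_re.trans hq_re.symm) ((hp i).symm.trans hq_i.symm)
      ((hp j).symm.trans hq_j.symm)
end

section
/- Every ℝ-linear derivation of the quaternions is skew-adjoint with respect to the standard inner product: if D : ℍ → ℍ is ℝ-linear and satisfies D(xy) = D(x)·y + x·D(y) for all x, y ∈ ℍ, then ⟨D(x), y⟩ + ⟨x, D(y)⟩ = 0 for all x, y ∈ ℍ, where ⟨x, y⟩ = Re(x̄·y). -/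
/-!
A derivation kills the scalars, and a pure quaternion `v` squares to the scalar `-‖v‖²`, so
`D v * v + v * D v = 0`. The imaginary part of the left side is `2 Re(D v) • v`, hence `D` takes
values in the pure quaternions and therefore commutes with conjugation. The pairing
`⟨D x, y⟩ + ⟨x, D y⟩` then becomes `Re (D (x̄ * y))`, which vanishes.
-/

section Leibniz

variable {R A : Type*} [CommSemiring R] [Ring A] [Algebra R A]

theorem map_one_eq_zero_of_leibniz (D : A →ₗ[R] A)
    (hD : ∀ x y : A, D (x * y) = D x * y + x * D y) : D 1 = 0 := by
  have h := hD 1 1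
  rw [mul_one, one_mul, mul_one] at h
  simpa using h

theorem map_algebraMap_eq_zero_of_leibniz (D : A →ₗ[R] A)
    (hD : ∀ x y : A, D (x * y) = D x * y + x * D y) (r : R) : D (algebraMap R A r) = 0 := by
  rw [Algebra.algebraMap_eq_smul_one, map_smul, map_one_eq_zero_of_leibniz D hD, smul_zero]

end Leibniz

namespace Quaternion

theorem im_mul_add_mul_of_re_eq_zero {R : Type*} [CommRing R] (q v : ℍ[R]) (hv : v.re = 0) :
    (q * v + v * q).im = (2 * q.re) • v := by
  ext <;> simp only [im_add, re_add, imI_add, imJ_add, imK_add, re_im, imI_im, imJ_im, imK_im,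
    imI_mul, imJ_mul, imK_mul, re_smul, imI_smul, imJ_smul, imK_smul, hv, smul_eq_mul] <;> ring

theorem map_coe_eq_zero_of_leibniz {R : Type*} [CommRing R] (D : ℍ[R] →ₗ[R] ℍ[R])
    (hD : ∀ x y : ℍ[R], D (x * y) = D x * y + x * D y) (r : R) : D r = 0 :=
  map_algebraMap_eq_zero_of_leibniz D hD r

variable {R : Type*} [Field R] [NeZero (2 : R)]

theorem re_map_eq_zero_of_leibniz (D : ℍ[R] →ₗ[R] ℍ[R])
    (hD : ∀ x y : ℍ[R], D (x * y) = D x * y + x * D y) (z : ℍ[R]) : (D z).re = 0 := by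
  have hz : D z = D z.im := by
    conv_lhs => rw [← re_add_im z]
    rw [map_add, map_coe_eq_zero_of_leibniz D hD, zero_add]
  have hsq : D z.im * z.im + z.im * D z.im = 0 := by
    rw [← hD, ← sq, im_sq, ← coe_neg, map_coe_eq_zero_of_leibniz D hD]
  have him := congrArg im hsq
  rw [im_mul_add_mul_of_re_eq_zero _ _ (re_im z), im_zero] at him
  rw [hz]
  rcases smul_eq_zero.1 him with h | h
  · exact (mul_eq_zero.1 h).resolve_left two_ne_zero
  · rw [h, map_zero, re_zero]

theorem star_map_eq_map_star_of_leibniz (D : ℍ[R] →ₗ[R] ℍ[R])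
    (hD : ∀ x y : ℍ[R], D (x * y) = D x * y + x * D y) (z : ℍ[R]) : star (D z) = D (star z) := by
  rw [star_eq_two_re_sub, star_eq_two_re_sub, re_map_eq_zero_of_leibniz D hD, map_sub,
    map_coe_eq_zero_of_leibniz D hD, mul_zero, coe_zero]

end Quaternion

/-- Every ℝ-linear derivation of the quaternions is skew-adjoint with respect to
the standard inner product `⟨x, y⟩ = Re(x̄·y)`. -/
theorem derivation_quaternion_skewAdjoint (D : Quaternion ℝ →ₗ[ℝ] Quaternion ℝ)
    (hD : ∀ x y : Quaternion ℝ, D (x * y) = D x * y + x * D y) :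
    ∀ x y : Quaternion ℝ, (star (D x) * y).re + (star x * D y).re = 0 := by
  intro x y
  rw [Quaternion.star_map_eq_map_star_of_leibniz D hD, ← Quaternion.re_add, ← hD]
  exact Quaternion.re_map_eq_zero_of_leibniz D hD _
end

section
/- An ℝ-linear endomorphism f of the quaternions ℍ is skew-adjoint with respect to the inner product ⟨x, y⟩ = Re(x̄·y) (i.e. ⟨f(x), y⟩ + ⟨x, f(y)⟩ = 0 for all x, y) if and only if there exist purely imaginary quaternions p and q such that f(x) = p·x + x·q for all x ∈ ℍ; moreover such p and q are uniquely determined by f. -/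
/-!
Write `⟪x, y⟫ = (star x * y).re`. If `p` and `q` are imaginary then `star p = -p`, and since
`re` is a trace (`(x * y).re = (y * x).re`) the two pairings `⟪p * x + x * q, y⟫` and
`⟪x, p * y + y * q⟫` cancel.

Conversely, the matrix of a skew-adjoint `f` in the orthonormal basis `1, i, j, k` is skew, so it is
determined by its six entries above the diagonal. The first row is `f 1`, which must equal `p + q`;
the three remaining entries `⟪f j, k⟫, ⟪f k, i⟫, ⟪f i, j⟫` are the coordinates of `p - q`.
Uniqueness: evaluating at `1` recovers `p + q`, and then `p` commutes with every quaternion,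
which forces an imaginary `p` to vanish.
-/

open Quaternion

theorem eq_zero_of_eq_neg_self {R : Type*} [Ring R] [NoZeroDivisors R] [NeZero (2 : R)] {a : R}
    (h : a = -a) : a = 0 := by
  rwa [eq_neg_iff_add_eq_zero, ← two_mul, mul_eq_zero, or_iff_right two_ne_zero] at h

namespace Quaternion

variable {R : Type*}

section CommRing

variable [CommRing R]

/- Named so that they are typed in `ℍ[R]`: a literal `⟨0, 1, 0, 0⟩` is elaborated in the underlying
`QuaternionAlgebra`, where the `Quaternion` simp lemmas do not fire. -/
@[simps] def unitI : ℍ[R] := ⟨0, 1, 0, 0⟩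
@[simps] def unitJ : ℍ[R] := ⟨0, 0, 1, 0⟩
@[simps] def unitK : ℍ[R] := ⟨0, 0, 0, 1⟩

theorem linearMap_ext {M : Type*} [AddCommMonoid M] [Module R M] {f g : ℍ[R] →ₗ[R] M}
    (h1 : f 1 = g 1) (hi : f unitI = g unitI) (hj : f unitJ = g unitJ) (hk : f unitK = g unitK) :
    f = g :=
  (QuaternionAlgebra.basisOneIJK _ _ _).ext fun n => by
    fin_cases n <;> simp only [QuaternionAlgebra.basisOneIJK, Module.Basis.coe_ofEquivFun]
    exacts [h1, hi, hj, hk]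

theorem re_star_unitI_mul (y : ℍ[R]) : (star unitI * y).re = y.imI := by simp
theorem re_star_unitJ_mul (y : ℍ[R]) : (star unitJ * y).re = y.imJ := by simp
theorem re_star_unitK_mul (y : ℍ[R]) : (star unitK * y).re = y.imK := by simp

theorem re_mul_comm (x y : ℍ[R]) : (x * y).re = (y * x).re := by
  simp only [re_mul]
  ring

theorem re_star_mul_comm (x y : ℍ[R]) : (star x * y).re = (star y * x).re := by
  rw [← re_star, star_mul, star_star]

theorem star_eq_neg_of_re_eq_zero {a : ℍ[R]} (ha : a.re = 0) : star a = -a := by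
  ext <;> simp [ha]

def IsSkewAdjoint (f : ℍ[R] → ℍ[R]) : Prop :=
  ∀ x y : ℍ[R], (star (f x) * y).re + (star x * f y).re = 0

theorem isSkewAdjoint_mul_add_mul {p q : ℍ[R]} (hp : p.re = 0) (hq : q.re = 0) :
    IsSkewAdjoint fun x => p * x + x * q := by
  intro x y
  simp only [star_add, star_mul, star_eq_neg_of_re_eq_zero hp, star_eq_neg_of_re_eq_zero hq,
    add_mul, mul_add, mul_neg, neg_mul, re_add, re_neg, mul_assoc, re_mul_comm q]
  ring

theorem IsSkewAdjoint.re_star_mul_apply_eq_neg {f : ℍ[R] → ℍ[R]} (hf : IsSkewAdjoint f)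
    (x y : ℍ[R]) : (star y * f x).re = -(star x * f y).re := by
  rw [re_star_mul_comm, eq_neg_iff_add_eq_zero]
  exact hf x y

end CommRing

section Field

variable [Field R] [NeZero (2 : R)]

theorem IsSkewAdjoint.re_star_mul_apply_self {f : ℍ[R] → ℍ[R]} (hf : IsSkewAdjoint f)
    (x : ℍ[R]) : (star x * f x).re = 0 :=
  eq_zero_of_eq_neg_self (hf.re_star_mul_apply_eq_neg x x)

theorem IsSkewAdjoint.exists_mul_add_mul {f : ℍ[R] →ₗ[R] ℍ[R]} (hf : IsSkewAdjoint f) :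
    ∃ p q : ℍ[R], p.re = 0 ∧ q.re = 0 ∧ ∀ x, f x = p * x + x * q := by
  have h00 := hf.re_star_mul_apply_self 1
  have h11 := hf.re_star_mul_apply_self unitI
  have h22 := hf.re_star_mul_apply_self unitJ
  have h33 := hf.re_star_mul_apply_self unitK
  have h01 := hf.re_star_mul_apply_eq_neg 1 unitI
  have h02 := hf.re_star_mul_apply_eq_neg 1 unitJ
  have h03 := hf.re_star_mul_apply_eq_neg 1 unitK
  have h12 := hf.re_star_mul_apply_eq_neg unitI unitJ
  have h13 := hf.re_star_mul_apply_eq_neg unitI unitK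
  have h23 := hf.re_star_mul_apply_eq_neg unitJ unitK
  simp only [star_one, one_mul, re_star_unitI_mul, re_star_unitJ_mul, re_star_unitK_mul]
    at h00 h11 h22 h33 h01 h02 h03 h12 h13 h23
  set w : ℍ[R] := (f unitJ).imK • unitI + (f unitK).imI • unitJ + (f unitI).imJ • unitK
  refine ⟨(2⁻¹ : R) • (f 1 + w), (2⁻¹ : R) • (f 1 - w), by simp [h00, w], by simp [h00, w],
    LinearMap.congr_fun (linearMap_ext (g := LinearMap.mulLeft R _ + LinearMap.mulRight R _)
      ?_ ?_ ?_ ?_)⟩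
  all_goals
    ext <;> simp only [w, LinearMap.add_apply, LinearMap.mulLeft_apply, LinearMap.mulRight_apply,
        re_add, imI_add, imJ_add, imK_add, re_sub, imI_sub, imJ_sub, imK_sub,
        re_smul, imI_smul, imJ_smul, imK_smul, re_mul, imI_mul, imJ_mul, imK_mul,
        re_one, imI_one, imJ_one, imK_one, re_unitI, imI_unitI, imJ_unitI, imK_unitI,
        re_unitJ, imI_unitJ, imJ_unitJ, imK_unitJ, re_unitK, imI_unitK, imJ_unitK, imK_unitK,
        smul_eq_mul, h00, h11, h22, h33, h01, h02, h03, h12, h13, h23] <;> field_simp <;> ring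

theorem eq_zero_of_re_eq_zero_of_commute {p : ℍ[R]} (hp : p.re = 0) (hi : Commute p unitI)
    (hj : Commute p unitJ) : p = 0 := by
  have hI := congrArg QuaternionAlgebra.imK hj.eq
  have hJ := congrArg QuaternionAlgebra.imK hi.eq
  have hK := congrArg QuaternionAlgebra.imJ hi.eq
  simp only [imJ_mul, imK_mul, re_unitI, imI_unitI, imJ_unitI, imK_unitI, re_unitJ, imI_unitJ,
    imJ_unitJ, imK_unitJ, mul_zero, zero_mul, mul_one, one_mul, add_zero, zero_add, sub_zero,
    zero_sub, sub_self] at hI hJ hK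
  ext <;> simp [hp, eq_zero_of_eq_neg_self hI, eq_zero_of_eq_neg_self hJ.symm,
    eq_zero_of_eq_neg_self hK]

theorem eq_of_forall_mul_add_mul_eq {p q p' q' : ℍ[R]} (hp : p.re = 0) (hp' : p'.re = 0)
    (h : ∀ x, p * x + x * q = p' * x + x * q') : p = p' ∧ q = q' := by
  have hq' : q' = p + q - p' := eq_sub_of_add_eq' (by simpa using (h 1).symm)
  have hcomm (x : ℍ[R]) : Commute (p - p') x := by
    have hx := h x
    rw [hq', mul_sub, mul_add] at hx
    rw [Commute, SemiconjBy, sub_mul, mul_sub]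
    linear_combination (norm := abel) hx
  obtain rfl : p = p' := sub_eq_zero.1 <|
    eq_zero_of_re_eq_zero_of_commute (by simp [hp, hp']) (hcomm unitI) (hcomm unitJ)
  simp [hq']

end Field

end Quaternion

/-- An ℝ-linear endomorphism of the quaternions is skew-adjoint w.r.t.
`⟨x, y⟩ = Re(x̄·y)` iff it is of the form `x ↦ p·x + x·q` for a unique pair of
purely imaginary quaternions `(p, q)`. -/
theorem skewAdjoint_quaternion_iff (f : Quaternion ℝ →ₗ[ℝ] Quaternion ℝ) :
    (∀ x y : Quaternion ℝ, (star (f x) * y).re + (star x * f y).re = 0) ↔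
      ∃! pq : Quaternion ℝ × Quaternion ℝ, pq.1.re = 0 ∧ pq.2.re = 0 ∧
        ∀ x : Quaternion ℝ, f x = pq.1 * x + x * pq.2 := by
  constructor
  · intro hf
    obtain ⟨p, q, hp, hq, hpq⟩ := IsSkewAdjoint.exists_mul_add_mul hf
    refine ⟨(p, q), ⟨hp, hq, hpq⟩, ?_⟩
    rintro ⟨p', q'⟩ ⟨hp', -, hpq'⟩
    obtain ⟨rfl, rfl⟩ := eq_of_forall_mul_add_mul_eq hp' hp fun x => (hpq' x).symm.trans (hpq x)
    rfl
  · rintro ⟨⟨p, q⟩, ⟨hp, hq, hpq⟩, -⟩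
    show IsSkewAdjoint f
    rw [show ⇑f = fun x => p * x + x * q from funext hpq]
    exact isSkewAdjoint_mul_add_mul hp hq
end

section
/- The triality algebra of ℂ is two-dimensional and abelian: the set of triples (A, B, C) of ℝ-linear endomorphisms of ℂ such that each of A, B, C is skew-adjoint with respect to the inner product ⟨x, y⟩ = Re(x̄·y) and A(xy) = B(x)·y + x·C(y) holds for all x, y ∈ ℂ, is a real Lie subalgebra (under componentwise commutator) of dimension 2 over ℝ on which the Lie bracket vanishes identically. -/
/-!
Skew-adjointness pins an ℝ-linear endomorphism of ℂ down to a real multiple `t • mulI` of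
multiplication by `I`, with `t = (f 1).im`. On such triples `(a • mulI, b • mulI, c • mulI)`
the triality identity holds iff `a = b + c` (evaluate at `x = y = 1`). So the triality algebra
is the image of the injective linear map `(b, c) ↦ ((b + c) • mulI, b • mulI, c • mulI)` on
`ℝ²`, and it is abelian because all its components are multiples of the one operator `mulI`.
-/

open Complex

attribute [local instance 100] LieRing.ofAssociativeRing

namespace Complex.Triality

local notation "End³" => Module.End ℝ ℂ × Module.End ℝ ℂ × Module.End ℝ ℂ

lemma linearMap_ext_one_I {M : Type*} [AddCommMonoid M] [Module ℝ M] {f g : ℂ →ₗ[ℝ] M}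
    (h1 : f 1 = g 1) (hI : f I = g I) : f = g :=
  basisOneI.ext fun i => by fin_cases i <;> simpa

noncomputable def mulI : Module.End ℝ ℂ := LinearMap.mulLeft ℝ I

@[simp]
lemma mulI_apply (x : ℂ) : mulI x = I * x := rfl

lemma mulI_ne_zero : mulI ≠ 0 := fun h => I_ne_zero (by simpa using LinearMap.congr_fun h 1)

def IsSkewAdjoint (f : Module.End ℝ ℂ) : Prop :=
  ∀ x y : ℂ, (star (f x) * y).re + (star x * f y).re = 0

lemma isSkewAdjoint_smul_mulI (t : ℝ) : IsSkewAdjoint (t • mulI) := by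
  intro x y
  rw [← add_re]
  simp only [LinearMap.smul_apply, mulI_apply, real_smul, star_mul', RCLike.star_def,
    conj_ofReal, conj_I]
  ring_nf
  exact zero_re

lemma IsSkewAdjoint.eq_smul_mulI {f : Module.End ℝ ℂ} (hf : IsSkewAdjoint f) :
    f = (f 1).im • mulI := by
  have h11 := hf 1 1
  have hII := hf I I
  have h1I := hf 1 I
  simp only [star_one, one_mul, mul_one, mul_re, star_def, conj_re, conj_im, I_re, I_im]
    at h11 hII h1I
  refine linearMap_ext_one_I (Complex.ext ?_ ?_) (Complex.ext ?_ ?_) <;>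
    simp only [LinearMap.smul_apply, mulI_apply, mul_one, I_mul_I, smul_neg, smul_re, smul_im,
      neg_re, neg_im, I_re, I_im, one_re, one_im, smul_eq_mul, mul_zero] <;> linarith

def IsTrialityTriple (T : End³) : Prop :=
  IsSkewAdjoint T.1 ∧ IsSkewAdjoint T.2.1 ∧ IsSkewAdjoint T.2.2 ∧
    ∀ x y : ℂ, T.1 (x * y) = T.2.1 x * y + x * T.2.2 y

lemma triality_smul_mulI_iff (a b c : ℝ) :
    (∀ x y : ℂ, (a • mulI) (x * y) = (b • mulI) x * y + x * (c • mulI) y) ↔ a = b + c := by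
  simp only [LinearMap.smul_apply, mulI_apply, real_smul]
  constructor
  · intro h
    simpa using congr_arg im (h 1 1)
  · rintro rfl x y
    push_cast
    ring

noncomputable def trialityParam : ℝ × ℝ →ₗ[ℝ] End³ :=
  ((LinearMap.fst ℝ ℝ ℝ + LinearMap.snd ℝ ℝ ℝ).smulRight mulI).prod
    (((LinearMap.fst ℝ ℝ ℝ).smulRight mulI).prod ((LinearMap.snd ℝ ℝ ℝ).smulRight mulI))

@[simp]
lemma trialityParam_apply (b c : ℝ) :
    trialityParam (b, c) = ((b + c) • mulI, b • mulI, c • mulI) := rfl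

lemma trialityParam_injective : Function.Injective trialityParam := by
  rintro ⟨b, c⟩ ⟨b', c'⟩ h
  simp only [trialityParam_apply, Prod.mk.injEq] at h
  exact Prod.ext (smul_left_injective ℝ mulI_ne_zero h.2.1)
    (smul_left_injective ℝ mulI_ne_zero h.2.2)

lemma isTrialityTriple_iff_mem_range (T : End³) :
    IsTrialityTriple T ↔ T ∈ LinearMap.range trialityParam := by
  constructor
  · rintro ⟨hA, hB, hC, hT⟩
    rw [hA.eq_smul_mulI, hB.eq_smul_mulI, hC.eq_smul_mulI, triality_smul_mulI_iff] at hT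
    refine ⟨((T.2.1 1).im, (T.2.2 1).im), ?_⟩
    rw [trialityParam_apply, ← hT, ← hA.eq_smul_mulI, ← hB.eq_smul_mulI, ← hC.eq_smul_mulI]
  · rintro ⟨⟨b, c⟩, rfl⟩
    exact ⟨isSkewAdjoint_smul_mulI _, isSkewAdjoint_smul_mulI _, isSkewAdjoint_smul_mulI _,
      (triality_smul_mulI_iff _ _ _).2 rfl⟩

lemma lie_prod_mk {R S U : Type*} [Ring R] [Ring S] [Ring U] (r r' : R) (s s' : S) (u u' : U) :
    ⁅(r, s, u), (r', s', u')⁆ = (⁅r, r'⁆, ⁅s, s'⁆, ⁅u, u'⁆) := by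
  simp only [Ring.lie_def, Prod.mk_mul_mk, Prod.mk_sub_mk]

lemma lie_trialityParam (p q : ℝ × ℝ) : ⁅trialityParam p, trialityParam q⁆ = 0 := by
  have lie_smul_smul (s t : ℝ) : ⁅s • mulI, t • mulI⁆ = 0 := by
    rw [smul_lie, lie_smul, lie_self, smul_zero, smul_zero]
  obtain ⟨b, c⟩ := p
  obtain ⟨b', c'⟩ := q
  simp only [trialityParam_apply, lie_prod_mk, lie_smul_smul, Prod.mk_zero_zero]

noncomputable def trialityAlgebra : LieSubalgebra ℝ End³ where
  toSubmodule := LinearMap.range trialityParam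
  lie_mem' := by
    rintro _ _ ⟨p, rfl⟩ ⟨q, rfl⟩
    rw [lie_trialityParam]
    exact Submodule.zero_mem _

end Complex.Triality

open Complex.Triality in
/-- The triality algebra of ℂ: the triples (A, B, C) of skew-adjoint ℝ-linear
endomorphisms of ℂ with A(xy) = B(x)·y + x·C(y) form a real Lie subalgebra
(under componentwise commutator) of dimension 2 with identically vanishing
bracket. -/
theorem triality_complex_two_dim_abelian :
    ∃ L : LieSubalgebra ℝ (Module.End ℝ ℂ × Module.End ℝ ℂ × Module.End ℝ ℂ),
      (L : Set (Module.End ℝ ℂ × Module.End ℝ ℂ × Module.End ℝ ℂ)) =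
        {T | (∀ x y : ℂ, (star (T.1 x) * y).re + (star x * T.1 y).re = 0) ∧
             (∀ x y : ℂ, (star (T.2.1 x) * y).re + (star x * T.2.1 y).re = 0) ∧
             (∀ x y : ℂ, (star (T.2.2 x) * y).re + (star x * T.2.2 y).re = 0) ∧
             (∀ x y : ℂ, T.1 (x * y) = T.2.1 x * y + x * T.2.2 y)} ∧
      Module.finrank ℝ L = 2 ∧
      (∀ a b : L, ⁅a, b⁆ = 0) := by
  refine ⟨trialityAlgebra, ?_, ?_, ?_⟩
  · exact Set.ext fun T => (isTrialityTriple_iff_mem_range T).symm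
  · show Module.finrank ℝ (LinearMap.range trialityParam) = 2
    rw [LinearMap.finrank_range_of_inj trialityParam_injective, Module.finrank_prod,
      Module.finrank_self]
  · rintro ⟨_, p, rfl⟩ ⟨_, q, rfl⟩
    exact Subtype.ext (lie_trialityParam p q)
end
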